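/- arXiv:1801.03807 — 2 statements merged into one kernel-verified Lean document; each statement's English description precedes it below -/
import Mathlib

section
/- The subspace A_z^0 ⊂ A_z is closed under each operator ∂_{α,β} for α,β ∈ {0,1,z}: ∂_{α,β}(A_z^0) ⊆ A_z^0. -/
open scoped BigOperators

/-- Letters: `0 ↦ e₀`, `1 ↦ e₁`, `2 ↦ e_z`. -/
abbrev Letter := Fin 3

/-- The free noncommutative ring `𝒜_z = ℤ⟨e₀, e₁, e_z⟩`. -/
abbrev Az := MonoidAlgebra ℤ (FreeMonoid Letter)

/-- The monomial (word) corresponding to a list of letters. -/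
noncomputable def wordOf (l : List Letter) : Az :=
  MonoidAlgebra.single (FreeMonoid.ofList l) 1

/-- The extended sequence `a₀ = 0, a₁, …, a_n, a_{n+1} = 1`. -/
def ext (a : List Letter) (j : ℕ) : Letter :=
  ((0 : Letter) :: a ++ [1]).getD j 1

/-- `∂_{α,β}` on a word. -/
noncomputable def Dword (α β : Letter) (a : List Letter) : Az :=
  ∑ i ∈ Finset.range a.length,
    (((if ({ext a (i + 1), ext a (i + 2)} : Finset Letter) = {α, β} then 1 else 0)
      - (if ({ext a i, ext a (i + 1)} : Finset Letter) = {α, β} then 1 else 0) : ℤ))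
      • wordOf (a.eraseIdx i)

/-- The linear operator `∂_{α,β} : 𝒜_z → 𝒜_z`. -/
noncomputable def del (α β : Letter) : Az →ₗ[ℤ] Az :=
  (Finsupp.lsum ℤ fun w => LinearMap.toSpanSingleton ℤ Az (Dword α β (FreeMonoid.toList w))) ∘ₗ (MonoidAlgebra.coeffLinearEquiv ℤ).toLinearMap

/-- The shuffle product of two words. -/
noncomputable def shuffleWord : List Letter → List Letter → Az
  | [], v => wordOf v
  | u, [] => wordOf u
  | a :: u, b :: v =>
      wordOf [a] * shuffleWord u (b :: v) + wordOf [b] * shuffleWord (a :: u) v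
termination_by u v => u.length + v.length

/-- The shuffle product as a bilinear map on `𝒜_z`. -/
noncomputable def sh : Az →ₗ[ℤ] Az →ₗ[ℤ] Az :=
  (Finsupp.lsum ℤ fun u => LinearMap.toSpanSingleton ℤ (Az →ₗ[ℤ] Az)
    ((Finsupp.lsum ℤ fun v =>
      LinearMap.toSpanSingleton ℤ Az (shuffleWord (FreeMonoid.toList u) (FreeMonoid.toList v))) ∘ₗ (MonoidAlgebra.coeffLinearEquiv ℤ).toLinearMap)) ∘ₗ (MonoidAlgebra.coeffLinearEquiv ℤ).toLinearMap

/-- The (generalized) stuffle product of two words (the left word should lie in `𝒜`). -/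
noncomputable def stWord : List Letter → List Letter → Az
  | [], v => wordOf v
  | u, [] => wordOf u
  | a :: u, b :: v =>
      if a = 0 then wordOf [0] * stWord u (b :: v)
      else if a = 1 then
        wordOf [b] * (stWord u (b :: v) + stWord (a :: u) v - wordOf [0] * stWord u v)
      else 0
termination_by u v => u.length + v.length

/-- The stuffle product as a bilinear map. -/
noncomputable def st : Az →ₗ[ℤ] Az →ₗ[ℤ] Az :=
  (Finsupp.lsum ℤ fun u => LinearMap.toSpanSingleton ℤ (Az →ₗ[ℤ] Az)
    ((Finsupp.lsum ℤ fun v =>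
      LinearMap.toSpanSingleton ℤ Az (stWord (FreeMonoid.toList u) (FreeMonoid.toList v))) ∘ₗ (MonoidAlgebra.coeffLinearEquiv ℤ).toLinearMap)) ∘ₗ (MonoidAlgebra.coeffLinearEquiv ℤ).toLinearMap

/-- `Const` kills every word containing the letter `e_z`. -/
noncomputable def Const : Az →ₗ[ℤ] Az :=
  (Finsupp.lsum ℤ fun w => LinearMap.toSpanSingleton ℤ Az
    (if (2 : Letter) ∈ FreeMonoid.toList w then 0 else wordOf (FreeMonoid.toList w))) ∘ₗ (MonoidAlgebra.coeffLinearEquiv ℤ).toLinearMap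

/-- `τ_z` on letters. -/
noncomputable def tauLetter (a : Letter) : Az :=
  if a = 0 then wordOf [2] - wordOf [1]
  else if a = 1 then wordOf [2] - wordOf [0]
  else wordOf [2]

/-- `τ_z` on a word (reversing the word). -/
noncomputable def tauWord : List Letter → Az
  | [] => 1
  | a :: u => tauWord u * tauLetter a

/-- The duality anti-automorphism `τ_z`. -/
noncomputable def tau : Az →ₗ[ℤ] Az :=
  (Finsupp.lsum ℤ fun w => LinearMap.toSpanSingleton ℤ Az (tauWord (FreeMonoid.toList w))) ∘ₗ (MonoidAlgebra.coeffLinearEquiv ℤ).toLinearMap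

/-- `𝒜_z^0`: span of the empty word and of words beginning with `e₁` or `e_z`
and ending in `e₀` or `e_z`. -/
noncomputable def Az0 : Submodule ℤ Az :=
  Submodule.span ℤ {x | ∃ l : List Letter,
    (l = [] ∨ (l.head? ≠ some 0 ∧ l.getLast? ≠ some 1)) ∧ x = wordOf l}

/-- `𝒜_z^1`: span of the empty word and of words beginning with `e₁` or `e_z`. -/
noncomputable def Az1 : Submodule ℤ Az :=
  Submodule.span ℤ {x | ∃ l : List Letter, l.head? ≠ some 0 ∧ x = wordOf l}

/-- `𝒜 = ℤ⟨e₀, e₁⟩` inside `𝒜_z`. -/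
noncomputable def Asub : Submodule ℤ Az :=
  Submodule.span ℤ {x | ∃ l : List Letter, (2 : Letter) ∉ l ∧ x = wordOf l}

/-- `𝒜^1 = ℤ ⊕ e₁𝒜`. -/
noncomputable def A1sub : Submodule ℤ Az :=
  Submodule.span ℤ {x | ∃ l : List Letter,
    ((2 : Letter) ∉ l ∧ l.head? ≠ some 0 ∧ l.head? ≠ some 2) ∧ x = wordOf l}

/-- `𝒜^0 = ℤ ⊕ e₁𝒜e₀`. -/
noncomputable def A0sub : Submodule ℤ Az :=
  Submodule.span ℤ {x | ∃ l : List Letter,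
    ((2 : Letter) ∉ l ∧ (l = [] ∨ (l.head? = some 1 ∧ l.getLast? = some 0))) ∧ x = wordOf l}

/-- `𝒜_z^{-2} = ℤ ⊕ e₁𝒜_z e₀ ⊕ e_z 𝒜_z e₀`. -/
noncomputable def Azm2 : Submodule ℤ Az :=
  Submodule.span ℤ {x | ∃ l : List Letter,
    (l = [] ∨ (l.head? ≠ some 0 ∧ l.getLast? = some 0)) ∧ x = wordOf l}

/-- `𝒜_z^0 ∩ ℤ⟨e₁, e_z⟩`. -/
noncomputable def Wsub : Submodule ℤ Az :=
  Submodule.span ℤ {x | ∃ l : List Letter,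
    ((0 : Letter) ∉ l ∧ (l = [] ∨ l.getLast? = some 2)) ∧ x = wordOf l}

/-- `ℤ⟨e_z⟩`: span of powers of `e_z`. -/
noncomputable def Zez : Submodule ℤ Az :=
  Submodule.span ℤ {x | ∃ k : ℕ, x = wordOf (List.replicate k 2)}

/-- `𝒜_z^{-1} = 𝒜_z^{-2}·ℤ⟨e_z⟩`. -/
noncomputable def Azm1 : Submodule ℤ Az :=
  Submodule.span ℤ {x | ∃ l : List Letter, ∃ k : ℕ,
    (l = [] ∨ (l.head? ≠ some 0 ∧ l.getLast? = some 0)) ∧ x = wordOf (l ++ List.replicate k 2)}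

/-- `ℤ⟨e₀, e_z⟩ ∩ 𝒜_z^0`. -/
noncomputable def Vsub : Submodule ℤ Az :=
  Submodule.span ℤ {x | ∃ l : List Letter,
    ((1 : Letter) ∉ l ∧ (l = [] ∨ l.head? = some 2)) ∧ x = wordOf l}

/-- All lists of length `r` with entries in `{e₀, e_z}`. -/
def tuples : ℕ → List (List Letter)
  | 0 => [[]]
  | n + 1 => (tuples n).flatMap fun t => [(0 : Letter) :: t, (2 : Letter) :: t]

/-- `∂_{1,b₁} ∘ ⋯ ∘ ∂_{1,b_r}` for `bs = [b₁, …, b_r]`. -/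
noncomputable def delChain : List Letter → Az →ₗ[ℤ] Az
  | [] => LinearMap.id
  | b :: bs => (del 1 b).comp (delChain bs)

/-- `∂_{z,α₁} ∘ ⋯ ∘ ∂_{z,α_r}` for `as = [α₁, …, α_r]`. -/
noncomputable def delZChain : List Letter → Az →ₗ[ℤ] Az
  | [] => LinearMap.id
  | a :: as => (del 2 a).comp (delZChain as)

/-- `φ_⧢` on a word. -/
noncomputable def phiShWord (l : List Letter) : Az :=
  ∑ r ∈ Finset.range (l.length + 1),
    ((tuples r).map fun b => sh (Const (delChain b (wordOf l))) (wordOf b)).sum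

/-- `φ_⧢ : 𝒜_z^0 → 𝒜_z^0` (defined on all of `𝒜_z`). -/
noncomputable def phiSh : Az →ₗ[ℤ] Az :=
  (Finsupp.lsum ℤ fun w => LinearMap.toSpanSingleton ℤ Az (phiShWord (FreeMonoid.toList w))) ∘ₗ (MonoidAlgebra.coeffLinearEquiv ℤ).toLinearMap

/-- `φ_*` on a word. -/
noncomputable def phiStWord (l : List Letter) : Az :=
  ∑ r ∈ Finset.range (l.length + 1),
    ((tuples r).map fun b => st (Const (delChain b (wordOf l))) (wordOf b)).sum

/-- `φ_* : 𝒜_z^0 → 𝒜_z^0` (defined on all of `𝒜_z`). -/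
noncomputable def phiSt : Az →ₗ[ℤ] Az :=
  (Finsupp.lsum ℤ fun w => LinearMap.toSpanSingleton ℤ Az (phiStWord (FreeMonoid.toList w))) ∘ₗ (MonoidAlgebra.coeffLinearEquiv ℤ).toLinearMap

/-- `φ_⊗` on a word. -/
noncomputable def phiTWord (l : List Letter) : TensorProduct ℤ Az Az :=
  ∑ r ∈ Finset.range (l.length + 1),
    ((tuples r).map fun b => (Const (delChain b (wordOf l))) ⊗ₜ[ℤ] (wordOf b)).sum

/-- `φ_⊗ : 𝒜_z^0 → 𝒜^0 ⊗ ℤ⟨e₀, e_z⟩` (defined on all of `𝒜_z`). -/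
noncomputable def phiT : Az →ₗ[ℤ] TensorProduct ℤ Az Az :=
  (Finsupp.lsum ℤ fun w => LinearMap.toSpanSingleton ℤ (TensorProduct ℤ Az Az)
    (phiTWord (FreeMonoid.toList w))) ∘ₗ (MonoidAlgebra.coeffLinearEquiv ℤ).toLinearMap

/-- The `i`-fold shuffle power of `e₁`. -/
noncomputable def e1pow : ℕ → Az
  | 0 => 1
  | n + 1 => sh (wordOf [1]) (e1pow n)

/-- Substitution `z → 1` on words. -/
noncomputable def subst1 : Az →ₗ[ℤ] Az :=
  (Finsupp.lsum ℤ fun w => LinearMap.toSpanSingleton ℤ Az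
    (wordOf ((FreeMonoid.toList w).map fun a => if a = 2 then 1 else a))) ∘ₗ (MonoidAlgebra.coeffLinearEquiv ℤ).toLinearMap


/-! `𝒜_z^0` is spanned by the words whose extended sequence `0 a₁ ⋯ aₙ 1` neither begins with
`0 0` nor ends with `1 1`. The term of `∂_{α,β}` deleting `aᵢ` has coefficient
`δ_{{aᵢ,aᵢ₊₁},{α,β}} - δ_{{aᵢ₋₁,aᵢ},{α,β}}`, which vanishes when `aᵢ₋₁ = aᵢ₊₁`. Deleting a letter
changes a boundary pair of the extended sequence only when it deletes `a₁` or `aₙ`, and the new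
boundary pair is then `(aᵢ₋₁, aᵢ₊₁)`, which is unequal whenever the term survives. -/

lemma ext_zero (l : List Letter) : ext l 0 = 0 := rfl

lemma ext_one (l : List Letter) : ext l 1 = l.head?.getD 1 := by
  cases l <;> rfl

lemma ext_length (l : List Letter) : ext l l.length = l.getLast?.getD 0 := by
  induction l using List.reverseRecOn with
  | nil => rfl
  | append_singleton l a _ =>
    simp [ext, List.getD_eq_getElem?_getD]

lemma ext_length_add_one (l : List Letter) : ext l (l.length + 1) = 1 := by
  simp [ext, List.getD_eq_getElem?_getD]

lemma ext_eraseIdx {l : List Letter} {i : ℕ} (hi : i < l.length) (j : ℕ) :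
    ext (l.eraseIdx i) j = if j ≤ i then ext l j else ext l (j + 1) := by
  have h : (0 :: l ++ [1]).eraseIdx (i + 1) = 0 :: (l.eraseIdx i ++ [1]) := by
    rw [List.cons_append, List.eraseIdx_cons_succ, List.eraseIdx_append_of_lt_length hi]
  unfold ext
  rw [List.cons_append, ← h, List.getD_eq_getElem?_getD, List.getElem?_eraseIdx]
  split_ifs <;> first | rfl | omega

def Admissible (l : List Letter) : Prop :=
  ext l 0 ≠ ext l 1 ∧ ext l l.length ≠ ext l (l.length + 1)

lemma admissible_iff (l : List Letter) :
    Admissible l ↔ l = [] ∨ (l.head? ≠ some 0 ∧ l.getLast? ≠ some 1) := by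
  rw [Admissible, ext_zero, ext_one, ext_length, ext_length_add_one]
  rcases l with _ | ⟨a, t⟩
  · decide
  · simp [List.getLast?_eq_some_getLast, eq_comm]

lemma Admissible.eraseIdx {l : List Letter} (hl : Admissible l) {i : ℕ} (hi : i < l.length)
    (hne : ext l i ≠ ext l (i + 2)) : Admissible (l.eraseIdx i) := by
  obtain ⟨hstart, hend⟩ := hl
  obtain ⟨n, hn⟩ : ∃ n, l.length = n + 1 := ⟨l.length - 1, by omega⟩
  rw [hn] at hend hi
  rw [Admissible, List.length_eraseIdx_of_lt (hn ▸ hi), hn, Nat.add_sub_cancel,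
    ext_eraseIdx (hn ▸ hi), ext_eraseIdx (hn ▸ hi), ext_eraseIdx (hn ▸ hi),
    ext_eraseIdx (hn ▸ hi), if_neg (by omega : ¬ n + 1 ≤ i)]
  constructor
  · rcases Nat.eq_zero_or_pos i with rfl | hpos
    · simpa using hne
    · simpa [Nat.one_le_iff_ne_zero, hpos.ne'] using hstart
  · rcases (Nat.lt_succ_iff.mp hi).eq_or_lt with rfl | hlt
    · simpa using hne
    · simpa [hlt.not_ge] using hend

lemma wordOf_mem_Az0 {l : List Letter} (hl : Admissible l) : wordOf l ∈ Az0 :=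
  Submodule.subset_span ⟨l, (admissible_iff l).mp hl, rfl⟩

lemma del_wordOf (α β : Letter) (l : List Letter) : del α β (wordOf l) = Dword α β l := by
  simp [del, wordOf, MonoidAlgebra.coeffLinearEquiv]

lemma Dword_mem_Az0 (α β : Letter) {l : List Letter} (hl : Admissible l) :
    Dword α β l ∈ Az0 := by
  refine Submodule.sum_mem _ fun i hi => ?_
  by_cases hne : ext l i = ext l (i + 2)
  · rw [hne, Finset.pair_comm, sub_self, zero_smul]
    exact Az0.zero_mem
  · exact Az0.smul_mem _ (wordOf_mem_Az0 (hl.eraseIdx (Finset.mem_range.mp hi) hne))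

/-- `𝒜_z^0` is stable under every operator `∂_{α,β}`. -/
theorem stmt_2 (α β : Letter) (u : Az) (hu : u ∈ Az0) :
    del α β u ∈ Az0 := by
  refine (Submodule.span_le (p := Az0.comap (del α β))).mpr ?_ hu
  rintro _ ⟨l, hl, rfl⟩
  rw [SetLike.mem_coe, Submodule.mem_comap, del_wordOf]
  exact Dword_mem_Az0 α β ((admissible_iff l).mpr hl)
end

section
/- The duality map τ_z preserves A_z^0: τ_z(A_z^0) ⊆ A_z^0. -/
open scoped BigOperators

/-! `τ_z` reverses a word and replaces `e₀` by `e_z - e₁`, `e₁` by `e_z - e₀` and `e_z` by itself.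
So in every word of `τ_z(w)` the first letter comes from the last letter of `w` and the last letter
from the first one; since only `e₁` produces `e₀` and only `e₀` produces `e₁`, a word not starting
with `e₀` and not ending in `e₁` is sent to a combination of such words. -/

open List

lemma wordOf_nil : wordOf [] = (1 : Az) := rfl

lemma wordOf_append (l m : List Letter) : wordOf (l ++ m) = wordOf l * wordOf m := by
  simp [wordOf, MonoidAlgebra.single_mul_single]

lemma tau_wordOf (l : List Letter) : tau (wordOf l) = tauWord l := by
  simp [tau, wordOf]

/-- `b` occurs in `τ_z(a)`. -/
def InTauLetter (a b : Letter) : Prop := (a ≠ 1 → b ≠ 0) ∧ (a ≠ 0 → b ≠ 1)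

lemma tauLetter_mem_span (a : Letter) :
    tauLetter a ∈ Submodule.span ℤ {x | ∃ b, InTauLetter a b ∧ x = wordOf [b]} := by
  have mem (b : Letter) (h : InTauLetter a b) :
      wordOf [b] ∈ Submodule.span ℤ {x | ∃ b, InTauLetter a b ∧ x = wordOf [b]} :=
    Submodule.subset_span ⟨b, h, rfl⟩
  fin_cases a
  · exact sub_mem (mem 2 ⟨by decide, by decide⟩) (mem 1 ⟨by decide, by decide⟩)
  · exact sub_mem (mem 2 ⟨by decide, by decide⟩) (mem 0 ⟨by decide, by decide⟩)
  · exact mem 2 ⟨by decide, by decide⟩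

lemma tauWord_mem_span (l : List Letter) :
    tauWord l ∈ Submodule.span ℤ {x | ∃ m, Forall₂ InTauLetter l m.reverse ∧ x = wordOf m} := by
  induction l with
  | nil => exact Submodule.subset_span ⟨[], Forall₂.nil, wordOf_nil.symm⟩
  | cons a u ih =>
    have hmul := Submodule.mul_mem_mul ih (tauLetter_mem_span a)
    rw [Submodule.span_mul_span] at hmul
    refine Submodule.span_mono ?_ hmul
    rintro _ ⟨_, ⟨m, hm, rfl⟩, _, ⟨b, hb, rfl⟩, rfl⟩
    refine ⟨m ++ [b], ?_, (wordOf_append m [b]).symm⟩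
    simpa using Forall₂.cons hb hm

lemma InTauLetter.eq_one_of_zero {a : Letter} (h : InTauLetter a 0) : a = 1 :=
  by_contra fun ha => h.1 ha rfl

lemma InTauLetter.eq_zero_of_one {a : Letter} (h : InTauLetter a 1) : a = 0 :=
  by_contra fun ha => h.2 ha rfl

lemma List.Forall₂.exists_head?_eq_some {α β : Type*} {R : α → β → Prop} {l : List α}
    {m : List β} {b : β} (h : Forall₂ R l m) (hb : m.head? = some b) :
    ∃ a, l.head? = some a ∧ R a b := by
  cases h with
  | nil => simp at hb
  | cons hR _ => exact ⟨_, rfl, by simp_all⟩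

def IsAz0Word (l : List Letter) : Prop := l = [] ∨ (l.head? ≠ some 0 ∧ l.getLast? ≠ some 1)

lemma IsAz0Word.of_forall₂_inTauLetter {l m : List Letter}
    (h : Forall₂ InTauLetter l m.reverse) (hl : IsAz0Word l) : IsAz0Word m := by
  rcases hl with rfl | ⟨hhead, hlast⟩
  · exact Or.inl (by simpa using forall₂_nil_left_iff.mp h)
  refine Or.inr ⟨fun hm => hlast ?_, fun hm => hhead ?_⟩
  · have h' : Forall₂ InTauLetter l.reverse m := by simpa using forall₂_reverse_iff.mpr h
    obtain ⟨a, ha, hR⟩ := h'.exists_head?_eq_some hm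
    rwa [head?_reverse, hR.eq_one_of_zero] at ha
  · obtain ⟨a, ha, hR⟩ := h.exists_head?_eq_some (by rwa [head?_reverse])
    rwa [hR.eq_zero_of_one] at ha

/-- The duality map `τ_z` preserves `𝒜_z^0`. -/
theorem stmt_6 (u : Az) (hu : u ∈ Az0) : tau u ∈ Az0 := by
  suffices Az0 ≤ Az0.comap tau from this hu
  refine Submodule.span_le.mpr ?_
  rintro _ ⟨l, hl, rfl⟩
  rw [SetLike.mem_coe, Submodule.mem_comap, tau_wordOf]
  refine Submodule.span_le.mpr ?_ (tauWord_mem_span l)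
  rintro _ ⟨m, hm, rfl⟩
  exact Submodule.subset_span ⟨m, IsAz0Word.of_forall₂_inTauLetter hm hl, rfl⟩
end
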